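/- arXiv:1512.07301 — 4 statements merged into one kernel-verified Lean document; each statement's English description precedes it below -/
import Mathlib

section
/- Let f, g ∈ K[Z] be polynomials over a field K of characteristic not 2 or 3, and set Δ(Z) = −16(4f(Z)³ + 27g(Z)²). If Δ(Z) is a nonzero constant and j(Z) = −1728(4f(Z))³/Δ(Z) is not a constant, then a contradiction arises; equivalently, if Δ(Z) ≠ 0 and j(Z) ∉ K, then Δ(Z) is a non-constant polynomial. -/
/-!
If `Δ` were a nonzero constant, then `4 f³ + 27 g² = C c` with `c ≠ 0`. By the Mason–Stothers
theorem (in the form of Mathlib's nonsolvability of the Fermat–Catalan equation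
`u a³ + v b² + w c⁶ = 0`, for which `1/3 + 1/2 + 1/6 ≤ 1`) the polynomial `f` is then
constant, so `j = -1728 (4f)³ / Δ` is constant too.
-/

open Polynomial

namespace Polynomial

variable {K : Type*} [Field K]

theorem isCoprime_of_C_mul_pow_add_C_mul_pow_eq_C {f g : K[X]} {m n : ℕ} (hm : 0 < m) (hn : 0 < n)
    {u v w : K} (hw : w ≠ 0) (h : C u * f ^ m + C v * g ^ n = C w) : IsCoprime f g := by
  refine (IsCoprime.pow_iff hm hn).mp ⟨C (w⁻¹ * u), C (w⁻¹ * v), ?_⟩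
  rw [C_mul, C_mul, mul_assoc, mul_assoc, ← mul_add, h, ← C_mul, inv_mul_cancel₀ hw, C_1]

theorem natDegree_eq_zero_of_C_mul_pow_three_add_C_mul_sq_eq_C (h2 : (2 : K) ≠ 0)
    (h3 : (3 : K) ≠ 0) {f g : K[X]} {u v w : K} (hu : u ≠ 0) (hv : v ≠ 0) (hw : w ≠ 0)
    (h : C u * f ^ 3 + C v * g ^ 2 = C w) : f.natDegree = 0 := by
  rcases eq_or_ne f 0 with rfl | hf
  · exact natDegree_zero
  rcases eq_or_ne g 0 with rfl | hg
  · have hdeg := congrArg natDegree h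
    rw [zero_pow two_ne_zero, mul_zero, add_zero, natDegree_C_mul hu, natDegree_pow,
      natDegree_C] at hdeg
    omega
  have h6 : ((6 : ℕ) : K) ≠ 0 := by
    rw [show ((6 : ℕ) : K) = 2 * 3 by norm_num]
    exact mul_ne_zero h2 h3
  have heq : C u * f ^ 3 + C v * g ^ 2 + C (-w) * 1 ^ 6 = 0 := by
    rw [h, one_pow, mul_one, C_neg, add_neg_cancel]
  exact (flt_catalan three_ne_zero two_ne_zero (by norm_num) (by norm_num)
    (by exact_mod_cast h3) (by exact_mod_cast h2) h6 hf hg one_ne_zero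
    (isCoprime_of_C_mul_pow_add_C_mul_pow_eq_C three_pos two_pos hw h)
    hu hv (neg_ne_zero.mpr hw) heq).1

end Polynomial

theorem discriminant_nonconstant {K : Type*} [Field K] (h2 : (2 : K) ≠ 0) (h3 : (3 : K) ≠ 0)
    (f g Δ : Polynomial K) (hΔdef : Δ = -16 * (4 * f ^ 3 + 27 * g ^ 2)) (hΔ : Δ ≠ 0)
    (hj : ∀ c : K, (-1728 : Polynomial K) * (4 * f) ^ 3 ≠ Polynomial.C c * Δ) :
    ∀ c : K, Δ ≠ Polynomial.C c := by
  intro d hΔd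
  have hd : d ≠ 0 := by rintro rfl; exact hΔ (hΔd.trans C_0)
  have h16 : (-16 : K) ≠ 0 := by
    rw [show (-16 : K) = -(2 ^ 4) by norm_num]
    exact neg_ne_zero.mpr (pow_ne_zero 4 h2)
  have hcurve : C 4 * f ^ 3 + C 27 * g ^ 2 = C ((-16)⁻¹ * d) := by
    refine mul_left_cancel₀ (C_ne_zero.mpr h16) ?_
    rw [← C_mul, mul_inv_cancel_left₀ h16, ← hΔd, hΔdef, C_neg, C_ofNat, C_ofNat, C_ofNat]
  have h4 : (4 : K) ≠ 0 := by
    rw [show (4 : K) = 2 ^ 2 by norm_num]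
    exact pow_ne_zero 2 h2
  have h27 : (27 : K) ≠ 0 := by
    rw [show (27 : K) = 3 ^ 3 by norm_num]
    exact pow_ne_zero 3 h3
  have hf := natDegree_eq_zero_of_C_mul_pow_three_add_C_mul_sq_eq_C h2 h3 h4 h27
    (mul_ne_zero (inv_ne_zero h16) hd) hcurve
  rw [eq_C_of_natDegree_eq_zero hf] at hj
  apply hj (-1728 * (4 * f.coeff 0) ^ 3 / d)
  rw [hΔd, ← C_mul, div_mul_cancel₀ _ hd]
  simp only [C_mul, C_pow, C_neg, C_ofNat]
end

section
/- Let p be prime, T < p, and W a convex subset of a T×T integer box with N(W) lattice points. Suppose for each nonzero a ∈ F_p the exponential sum Σ_{(u,v)∈W∩ℤ², p∤v} e_p(au/v) is bounded by T^{1/2}p^{1/2+o(1)}, and suppose for each m ≥ 0 and n ≥ 1 the twisted sum Σ_{w∈F_p, Δ(w)≠0} sym_n(ψ_p(E(w)))e_p(mw) is bounded by Cnp^{1/2}. Then Σ_{(u,v)∈W∩ℤ², Δ(u/v)≢0 mod p} sym_n(ψ_p(E(u/v))) ≪ nT^{1/2}p^{1+o(1)}. -/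
/-! Writing `Φ w` for `sym_n (ψ w)` when `Δ(w) ≠ 0` and `0` otherwise, the sum is
`∑_{x ∈ S} Φ(u/v)` over the lattice points `S` of `W` with `p ∤ v`. Fourier inversion on `ZMod p`
turns it into `p⁻¹ ∑_k Φ̂(k) ∑_{x ∈ S} e_p(k u/v)`. The twisted-sum hypothesis bounds every `Φ̂(k)`
by `C n p^{1/2}`, the exponential-sum hypothesis bounds the inner sums with `k ≠ 0` by
`L = T^{1/2} p^{1/2+ε}`, and the `k = 0` term is at most `#S ≤ T² ≤ p L` because `T < p`. -/

/-- `sym n θ = sin((n+1)θ)/sin θ`, extended by continuity at `θ = 0, π`. -/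
noncomputable def symAngle (n : ℕ) (θ : ℝ) : ℝ :=
  if θ = 0 then n + 1
  else if θ = Real.pi then (-1) ^ n * (n + 1)
  else Real.sin ((n + 1) * θ) / Real.sin θ

open Finset Complex ZMod

namespace ZMod

variable {N : ℕ} [NeZero N]

lemma exp_val_div_eq_stdAddChar (z : ZMod N) :
    exp (2 * Real.pi * I * ((z.val : ℝ) / N)) = stdAddChar z := by
  rw [stdAddChar_apply, toCircle_apply]
  push_cast
  ring_nf

variable {ι : Type*} (S : Finset ι) (r : ι → ZMod N) (Φ : ZMod N → ℂ)

lemma sum_comp_eq_inv_mul_sum_dft_mul :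
    ∑ x ∈ S, Φ (r x) = (N : ℂ)⁻¹ * ∑ k, 𝓕 Φ k * ∑ x ∈ S, stdAddChar (k * r x) := by
  have hinv (z : ZMod N) : Φ z = (N : ℂ)⁻¹ * ∑ k, 𝓕 Φ k * stdAddChar (k * z) := by
    conv_lhs => rw [← (dft (E := ℂ)).symm_apply_apply Φ]
    simp only [invDFT_apply, smul_eq_mul, mul_comm]
  simp only [hinv, ← mul_sum]
  rw [sum_comm]
  simp only [mul_sum]

lemma norm_sum_comp_le {K L : ℝ} (hK : ∀ k, ‖𝓕 Φ k‖ ≤ K)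
    (hL : ∀ k ≠ 0, ‖∑ x ∈ S, stdAddChar (k * r x)‖ ≤ L) (hL₀ : 0 ≤ L) :
    ‖∑ x ∈ S, Φ (r x)‖ ≤ K * (#S / N + L) := by
  set U : ZMod N → ℂ := fun k ↦ ∑ x ∈ S, stdAddChar (k * r x)
  have hK₀ : 0 ≤ K := (norm_nonneg _).trans (hK 0)
  have hN : (0 : ℝ) < N := by exact_mod_cast (NeZero.pos N)
  have hU₀ : ‖U 0‖ ≤ #S := by
    simp [U]
  have hsumU : ∑ k, ‖U k‖ ≤ #S + N * L := by
    rw [← sum_erase_add univ _ (mem_univ 0), add_comm]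
    gcongr
    calc ∑ k ∈ univ.erase 0, ‖U k‖ ≤ ∑ k ∈ univ.erase (0 : ZMod N), L :=
          sum_le_sum fun k hk ↦ hL k (ne_of_mem_erase hk)
      _ ≤ N * L := by
          rw [sum_const, nsmul_eq_mul]
          gcongr
          exact_mod_cast (card_erase_le).trans (card_univ.trans (ZMod.card N)).le
  rw [sum_comp_eq_inv_mul_sum_dft_mul, norm_mul, norm_inv, norm_natCast]
  calc (N : ℝ)⁻¹ * ‖∑ k, 𝓕 Φ k * U k‖ ≤ (N : ℝ)⁻¹ * ∑ k, K * ‖U k‖ := by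
        gcongr
        refine (norm_sum_le _ _).trans (sum_le_sum fun k _ ↦ ?_)
        rw [norm_mul]
        gcongr
        exact hK k
    _ ≤ (N : ℝ)⁻¹ * (K * (#S + N * L)) := by
        rw [← mul_sum]
        gcongr
    _ = K * (#S / N + L) := by
        field_simp

end ZMod

lemma mul_self_le_mul_rpow {T p ε : ℝ} (hT : 0 ≤ T) (hTp : T ≤ p) (hp : 1 ≤ p) (hε : 0 ≤ ε) :
    T * T ≤ p * (T ^ (1 / 2 : ℝ) * p ^ (1 / 2 + ε)) := by
  have hp₀ : 0 < p := by linarith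
  calc T * T = T ^ (1 / 2 : ℝ) * T ^ (3 / 2 : ℝ) := by
        rw [← Real.rpow_add' hT (by norm_num)]; norm_num [sq]
    _ ≤ T ^ (1 / 2 : ℝ) * p ^ (3 / 2 + ε) := by
        gcongr
        exact (Real.rpow_le_rpow hT hTp (by norm_num)).trans
          (Real.rpow_le_rpow_of_exponent_le hp (by linarith))
    _ = p * (T ^ (1 / 2 : ℝ) * p ^ (1 / 2 + ε)) := by
        rw [show (3 / 2 + ε) = 1 + (1 / 2 + ε) by ring, Real.rpow_add hp₀, Real.rpow_one]
        ring

open Finset Classical in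
theorem sym_sum_over_convex_set :
    ∀ ε > (0:ℝ), ∀ Cexp > (0:ℝ), ∃ C > (0:ℝ),
      ∀ (p T : ℕ) [Fact p.Prime] (A B : ℤ) (W : Set (ℝ × ℝ)),
        Convex ℝ W →
        W ⊆ Set.Icc ((A:ℝ) + 1) ((A:ℝ) + T) ×ˢ Set.Icc ((B:ℝ) + 1) ((B:ℝ) + T) →
        T < p → 1 ≤ T →
        ∀ (Δ : Polynomial (ZMod p)) (ψ : ZMod p → ℝ),
          (∀ w, ψ w ∈ Set.Icc 0 Real.pi) →
          ∀ n : ℕ, 1 ≤ n →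
          -- exponential sum hypothesis over lattice points of `W`
          (∀ a : ZMod p, a ≠ 0 →
            ‖∑ x ∈ (Finset.Icc (A + 1) (A + (T:ℤ)) ×ˢ Finset.Icc (B + 1) (B + (T:ℤ))).filter
                (fun x : ℤ × ℤ => ((x.1 : ℝ), (x.2 : ℝ)) ∈ W ∧ ¬ (p:ℤ) ∣ x.2),
              Complex.exp (2 * Real.pi * Complex.I *
                (((a * (x.1 : ZMod p) * (x.2 : ZMod p)⁻¹).val : ℝ) / p))‖
              ≤ (T : ℝ) ^ ((1:ℝ)/2) * (p : ℝ) ^ ((1:ℝ)/2 + ε)) →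
          -- twisted sum hypothesis over `F_p`
          (∀ m : ZMod p,
            ‖∑ w ∈ Finset.univ.filter (fun w : ZMod p => Polynomial.eval w Δ ≠ 0),
              (symAngle n (ψ w) : ℂ) *
                Complex.exp (2 * Real.pi * Complex.I * (((m * w).val : ℝ) / p))‖
              ≤ Cexp * n * (p : ℝ) ^ ((1:ℝ)/2)) →
          |∑ x ∈ (Finset.Icc (A + 1) (A + (T:ℤ)) ×ˢ Finset.Icc (B + 1) (B + (T:ℤ))).filter
              (fun x : ℤ × ℤ => ((x.1 : ℝ), (x.2 : ℝ)) ∈ W ∧ ¬ (p:ℤ) ∣ x.2 ∧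
                Polynomial.eval ((x.1 : ZMod p) * (x.2 : ZMod p)⁻¹) Δ ≠ 0),
            symAngle n (ψ ((x.1 : ZMod p) * (x.2 : ZMod p)⁻¹))|
            ≤ C * n * (T : ℝ) ^ ((1:ℝ)/2) * (p : ℝ) ^ (1 + ε) := by
  intro ε hε Cexp hCexp
  refine ⟨2 * Cexp, by positivity, ?_⟩
  intro p T _ A B W _ _ hTp _ Δ ψ _ n _ hexp htw
  simp only [exp_val_div_eq_stdAddChar] at hexp htw
  set S := (Icc (A + 1) (A + (T:ℤ)) ×ˢ Icc (B + 1) (B + (T:ℤ))).filter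
    (fun x : ℤ × ℤ => ((x.1 : ℝ), (x.2 : ℝ)) ∈ W ∧ ¬ (p:ℤ) ∣ x.2)
  set Φ : ZMod p → ℂ := fun w ↦ if Polynomial.eval w Δ ≠ 0 then (symAngle n (ψ w) : ℂ) else 0
  set L : ℝ := (T : ℝ) ^ ((1:ℝ)/2) * (p : ℝ) ^ ((1:ℝ)/2 + ε)
  have hΦ (k : ZMod p) : ‖𝓕 Φ k‖ ≤ Cexp * n * (p : ℝ) ^ ((1:ℝ)/2) := by
    convert htw (-k) using 2
    rw [dft_apply, sum_filter]
    refine sum_congr rfl fun w _ ↦ ?_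
    simp only [Φ, smul_eq_mul, ite_mul, zero_mul, mul_neg, mul_comm]
  have hS (k : ZMod p) (hk : k ≠ 0) :
      ‖∑ x ∈ S, stdAddChar (k * ((x.1 : ZMod p) * (x.2 : ZMod p)⁻¹))‖ ≤ L := by
    simpa only [mul_assoc] using hexp k hk
  have hp : (1 : ℝ) ≤ p := by exact_mod_cast (Fact.out : p.Prime).one_lt.le
  have hcard : (#S : ℝ) / p ≤ L := by
    rw [div_le_iff₀' (by positivity)]
    calc (#S : ℝ) ≤ T * T := by
          exact_mod_cast (card_filter_le _ _).trans_eq (by simp [card_product])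
      _ ≤ p * L := mul_self_le_mul_rpow (by positivity) (by exact_mod_cast hTp.le) hp hε.le
  calc _ = ‖∑ x ∈ S, Φ ((x.1 : ZMod p) * (x.2 : ZMod p)⁻¹)‖ := by
        rw [← Real.norm_eq_abs, ← Complex.norm_real]
        push_cast
        simp only [S, Φ, sum_filter, ite_and]
    _ ≤ Cexp * n * (p : ℝ) ^ ((1:ℝ)/2) * (#S / p + L) :=
        norm_sum_comp_le S _ Φ hΦ hS (by positivity)
    _ ≤ Cexp * n * (p : ℝ) ^ ((1:ℝ)/2) * (2 * L) := by gcongr; linarith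
    _ = 2 * Cexp * n * (T : ℝ) ^ ((1:ℝ)/2) * (p : ℝ) ^ (1 + ε) := by
        rw [show 1 + ε = (1:ℝ)/2 + ((1:ℝ)/2 + ε) by ring, Real.rpow_add (by positivity)]
        ring
end

section
/- Let m ≥ 2 be an integer, p prime, T ≥ 2. The number W of solutions to the congruence u₁v₂ ≡ u₂v₁ (mod p) with 1 ≤ u₁, u₂, v₁, v₂ ≤ T and gcd(u₁u₂v₁v₂, p) = 1 satisfies W ≪ T⁴/p + T²(log p)². -/
/-!
Fix `u₁ = a`, `u₂ = c` and write `a = g x`, `c = g z` with `g = gcd(a, c)`. As `p ∤ g`, the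
congruence `a v₂ ≡ c v₁` becomes `x v₂ ≡ z v₁ (mod p)`. If `x ≤ z`, a solution `(v₁, v₂) ∈ [1, T]²`
is determined by the integer `(x v₂ - z v₁) / p`, which takes `O(zT/p)` values, together with
`⌊v₂ / z⌋`: since `x` and `z` are coprime, two solutions with the same `x v₂ - z v₁` have `v₂`
congruent modulo `z`. This gives `O(T²/p + T g / max(a, c) + 1)` solutions for each `(a, c)`.
Bounding `g / max(a, c) ≤ g / √(ac) ≤ ∑_{e ∣ a, e ∣ c} e / √(ac)` makes the sum over `a, c ≤ T`
factor, and it is `O(T log T)`. Hence `W ≪ T⁴/p + T² log T`, and `log T ≤ log p` unless `p ≤ T`,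
in which case `T² log T ≤ T⁴/p`.
-/

open Finset Real

theorem sum_inv_sqrt_le (M : ℕ) : ∑ a ∈ Icc 1 M, (√(a : ℝ))⁻¹ ≤ 2 * √(M : ℝ) := by
  induction M with
  | zero => simp
  | succ M ih =>
    rw [sum_Icc_succ_top (by omega)]
    have hM : √(M : ℝ) ^ 2 = M := sq_sqrt M.cast_nonneg
    have hM1 : √((M + 1 : ℕ) : ℝ) ^ 2 = M + 1 := by rw [sq_sqrt (by positivity)]; push_cast; ring
    have hpos : 0 < √((M + 1 : ℕ) : ℝ) := sqrt_pos.2 (by positivity)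
    -- `1 ≤ 2 √(M+1) (√(M+1) - √M)` is AM-GM for `√M √(M+1)`.
    have step : (√((M + 1 : ℕ) : ℝ))⁻¹ ≤ 2 * √((M + 1 : ℕ) : ℝ) - 2 * √(M : ℝ) := by
      rw [inv_le_iff_one_le_mul₀ hpos]
      nlinarith [sq_nonneg (√(M : ℝ) - √((M + 1 : ℕ) : ℝ))]
    linarith

theorem sum_inv_sqrt_filter_dvd_le (T e : ℕ) (he : 0 < e) :
    ∑ a ∈ (Icc 1 T).filter (e ∣ ·), (√(a : ℝ))⁻¹ ≤ 2 * √(T : ℝ) / e := by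
  have hsub : (Icc 1 T).filter (e ∣ ·) ⊆ (Icc 1 (T / e)).image (e * ·) := by
    rintro _ ha
    obtain ⟨⟨ha1, haT⟩, k, rfl⟩ := by simpa only [mem_filter, mem_Icc] using ha
    refine mem_image.2 ⟨k, mem_Icc.2 ⟨Nat.pos_of_mul_pos_left ha1, ?_⟩, rfl⟩
    rwa [Nat.le_div_iff_mul_le he, mul_comm]
  have he' : (0 : ℝ) < e := by exact_mod_cast he
  calc ∑ a ∈ (Icc 1 T).filter (e ∣ ·), (√(a : ℝ))⁻¹
      ≤ ∑ a ∈ (Icc 1 (T / e)).image (e * ·), (√(a : ℝ))⁻¹ :=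
        sum_le_sum_of_subset_of_nonneg hsub fun _ _ _ => by positivity
    _ = (√(e : ℝ))⁻¹ * ∑ k ∈ Icc 1 (T / e), (√(k : ℝ))⁻¹ := by
        rw [sum_image fun _ _ _ _ h => Nat.eq_of_mul_eq_mul_left he h, mul_sum]
        refine sum_congr rfl fun k _ => ?_
        rw [Nat.cast_mul, sqrt_mul he'.le, mul_inv]
    _ ≤ (√(e : ℝ))⁻¹ * (2 * √(T / e : ℝ)) := by
        gcongr
        exact (sum_inv_sqrt_le _).trans (by gcongr; exact Nat.cast_div_le)
    _ = 2 * √(T : ℝ) / e := by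
        rw [sqrt_div' _ he'.le]
        field_simp
        rw [sq_sqrt he'.le, mul_comm]

theorem sum_gcd_div_sqrt_le (T : ℕ) :
    ∑ ac ∈ Icc 1 T ×ˢ Icc 1 T, (ac.1.gcd ac.2 : ℝ) / √(ac.1 * ac.2 : ℝ)
      ≤ 4 * T * (1 + log T) := by
  set f : ℕ → ℕ × ℕ → ℝ := fun e ac =>
    if e ∣ ac.1 ∧ e ∣ ac.2 then e * ((√(ac.1 : ℝ))⁻¹ * (√(ac.2 : ℝ))⁻¹) else 0
  have hgcd : ∀ ac ∈ Icc 1 T ×ˢ Icc 1 T,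
      (ac.1.gcd ac.2 : ℝ) / √(ac.1 * ac.2 : ℝ) ≤ ∑ e ∈ Icc 1 T, f e ac := by
    rintro ⟨a, c⟩ hac
    obtain ⟨⟨ha1, haT⟩, hc1, -⟩ := by simpa only [mem_product, mem_Icc] using hac
    have hg : a.gcd c ∈ Icc 1 T :=
      mem_Icc.2 ⟨Nat.gcd_pos_of_pos_left _ ha1, (Nat.gcd_le_left _ ha1).trans haT⟩
    refine le_trans ?_ (single_le_sum (fun e _ => ?_) hg)
    · simp only [f, if_pos (And.intro (Nat.gcd_dvd_left a c) (Nat.gcd_dvd_right a c))]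
      rw [sqrt_mul (by positivity), div_eq_mul_inv, mul_inv]
    · simp only [f]; split_ifs <;> positivity
  have hfactor : ∀ e ∈ Icc 1 T, ∑ ac ∈ Icc 1 T ×ˢ Icc 1 T, f e ac
      = e * (∑ a ∈ (Icc 1 T).filter (e ∣ ·), (√(a : ℝ))⁻¹) ^ 2 := by
    intro e _
    rw [← sum_filter, filter_product (e ∣ ·) (e ∣ ·), ← mul_sum, sum_product, sq, sum_mul_sum]
  calc ∑ ac ∈ Icc 1 T ×ˢ Icc 1 T, (ac.1.gcd ac.2 : ℝ) / √(ac.1 * ac.2 : ℝ)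
      ≤ ∑ ac ∈ Icc 1 T ×ˢ Icc 1 T, ∑ e ∈ Icc 1 T, f e ac := sum_le_sum hgcd
    _ = ∑ e ∈ Icc 1 T, e * (∑ a ∈ (Icc 1 T).filter (e ∣ ·), (√(a : ℝ))⁻¹) ^ 2 := by
        rw [sum_comm]; exact sum_congr rfl hfactor
    _ ≤ ∑ e ∈ Icc 1 T, 4 * T * (e : ℝ)⁻¹ := by
        refine sum_le_sum fun e he => ?_
        have he' : (0 : ℝ) < e := by exact_mod_cast (mem_Icc.1 he).1
        calc (e : ℝ) * (∑ a ∈ (Icc 1 T).filter (e ∣ ·), (√(a : ℝ))⁻¹) ^ 2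
            ≤ e * (2 * √(T : ℝ) / e) ^ 2 := by
              gcongr
              exact sum_inv_sqrt_filter_dvd_le T e (mem_Icc.1 he).1
          _ = 4 * T * (e : ℝ)⁻¹ := by
              rw [div_pow, mul_pow, sq_sqrt T.cast_nonneg]; field_simp; ring
    _ = 4 * T * harmonic T := by
        rw [← mul_sum, harmonic_eq_sum_Icc]; push_cast; rfl
    _ ≤ 4 * T * (1 + log T) := by gcongr; exact harmonic_le_one_add_log T

theorem card_modEq_le_of_coprime_of_le {p T x z : ℕ} (hp : 0 < p) (hxz : x.Coprime z) (hz : 0 < z)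
    (hle : x ≤ z) (hzT : z ≤ T) :
    (((Icc 1 T ×ˢ Icc 1 T).filter fun bd : ℕ × ℕ => x * bd.2 ≡ z * bd.1 [MOD p]).card : ℝ)
      ≤ 4 * T ^ 2 / p + T / z + 1 := by
  set K := z * T / p
  let ψ : ℕ × ℕ → ℤ × ℕ := fun bd => (((x * bd.2 : ℕ) - (z * bd.1 : ℕ) : ℤ) / p, bd.2 / z)
  have hdvd : ∀ b d, x * d ≡ z * b [MOD p] → (p : ℤ) ∣ (x * d : ℕ) - (z * b : ℕ) := by
    intro b d h
    simpa using (Nat.modEq_iff_dvd.1 h).neg_right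
  have hcard : ((Icc 1 T ×ˢ Icc 1 T).filter fun bd : ℕ × ℕ => x * bd.2 ≡ z * bd.1 [MOD p]).card
      ≤ (Icc (-K : ℤ) K ×ˢ range (T / z + 1)).card := by
    refine card_le_card_of_injOn ψ (fun bd hbd => ?_) (fun bd hbd bd' hbd' h => ?_)
    · obtain ⟨⟨⟨hb1, hbT⟩, hd1, hdT⟩, hmod⟩ := by
        simpa only [coe_filter, mem_product, mem_Icc] using hbd
      obtain ⟨m, hm⟩ := hdvd _ _ hmod
      have hlo : -((z * T : ℕ) : ℤ) ≤ p * m := by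
        rw [← hm]; push_cast; nlinarith
      have hhi : p * m ≤ ((z * T : ℕ) : ℤ) := by
        rw [← hm]; push_cast; nlinarith
      simp only [ψ, coe_product, Set.mem_prod, coe_Icc, Set.mem_Icc, coe_range, Set.mem_Iio, hm]
      rw [Int.mul_ediv_cancel_left _ (by exact_mod_cast hp.ne')]
      refine ⟨⟨?_, ?_⟩, Nat.lt_succ_of_le (Nat.div_le_div_right hdT)⟩
      · rw [neg_le, Int.natCast_div, Int.le_ediv_iff_mul_le (by exact_mod_cast hp)]; linarith
      · rw [Int.natCast_div, Int.le_ediv_iff_mul_le (by exact_mod_cast hp)]; linarith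
    · obtain ⟨-, hmod⟩ := by simpa only [coe_filter, mem_product] using hbd
      obtain ⟨-, hmod'⟩ := by simpa only [coe_filter, mem_product] using hbd'
      obtain ⟨hm, hq⟩ := Prod.mk.inj h
      have hlin : ((x * bd.2 : ℕ) - (z * bd.1 : ℕ) : ℤ) = (x * bd'.2 : ℕ) - (z * bd'.1 : ℕ) := by
        rw [← Int.mul_ediv_cancel' (hdvd _ _ hmod), ← Int.mul_ediv_cancel' (hdvd _ _ hmod'), hm]
      have hr : bd.2 ≡ bd'.2 [MOD z] := by
        refine Nat.modEq_iff_dvd.2 ((Nat.isCoprime_iff_coprime.2 hxz).symm.dvd_of_dvd_mul_left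
          ⟨bd'.1 - bd.1, ?_⟩)
        push_cast at hlin ⊢; linarith
      have hd : bd.2 = bd'.2 := by
        rw [← Nat.div_add_mod bd.2 z, ← Nat.div_add_mod bd'.2 z, hq, hr]
      have hb : bd.1 = bd'.1 := by
        rw [hd] at hlin
        push_cast at hlin
        have : (z * bd.1 : ℤ) = z * bd'.1 := by linarith
        exact Nat.eq_of_mul_eq_mul_left hz (by exact_mod_cast this)
      exact Prod.ext hb hd
  have hK : (K : ℝ) ≤ z * T / p := by exact_mod_cast Nat.cast_div_le
  have hTz : ((T / z : ℕ) : ℝ) ≤ T / z := Nat.cast_div_le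
  rw [card_product, Int.card_Icc, card_range, show ((K : ℤ) + 1 - -K).toNat = 2 * K + 1 by omega]
    at hcard
  calc (((Icc 1 T ×ˢ Icc 1 T).filter fun bd : ℕ × ℕ => x * bd.2 ≡ z * bd.1 [MOD p]).card : ℝ)
      ≤ ((2 * K + 1) * (T / z + 1) : ℕ) := by exact_mod_cast hcard
    _ ≤ (2 * (z * T / p) + 1) * (T / z + 1) := by push_cast; gcongr
    _ = 2 * (T * T / p) + 2 * (z * T / p) + T / z + 1 := by field_simp; ring
    _ ≤ 4 * T ^ 2 / p + T / z + 1 := by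
        have : z * T / p ≤ (T * T : ℝ) / p := by gcongr
        have h4 : 4 * (T : ℝ) ^ 2 / p = 2 * (T * T / p) + 2 * (T * T / p) := by ring
        linarith

theorem card_modEq_le_of_coprime {p T x z : ℕ} (hp : 0 < p) (hxz : x.Coprime z) (hx : 0 < x)
    (hz : 0 < z) (hxT : x ≤ T) (hzT : z ≤ T) :
    (((Icc 1 T ×ˢ Icc 1 T).filter fun bd : ℕ × ℕ => x * bd.2 ≡ z * bd.1 [MOD p]).card : ℝ)
      ≤ 4 * T ^ 2 / p + T / √(x * z : ℝ) + 1 := by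
  rcases le_total x z with hle | hle
  · refine (card_modEq_le_of_coprime_of_le hp hxz hz hle hzT).trans ?_
    gcongr
    calc √(x * z : ℝ) ≤ √(z * z : ℝ) := by gcongr
      _ = z := sqrt_mul_self z.cast_nonneg
  · have hswap : ((Icc 1 T ×ˢ Icc 1 T).filter fun bd : ℕ × ℕ => x * bd.2 ≡ z * bd.1 [MOD p]).card
        = ((Icc 1 T ×ˢ Icc 1 T).filter fun bd : ℕ × ℕ => z * bd.2 ≡ x * bd.1 [MOD p]).card := by
      refine card_nbij' Prod.swap Prod.swap ?_ ?_ (fun _ _ => rfl) (fun _ _ => rfl) <;>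
      · rintro ⟨b, d⟩ h
        simp only [mem_coe, mem_filter, mem_product] at h ⊢
        exact ⟨h.1.symm, h.2.symm⟩
    rw [hswap]
    refine (card_modEq_le_of_coprime_of_le hp hxz.symm hx hle hxT).trans ?_
    gcongr
    calc √(x * z : ℝ) ≤ √(x * x : ℝ) := by gcongr
      _ = x := sqrt_mul_self x.cast_nonneg

theorem card_modEq_le {p T a c : ℕ} (hp : p.Prime) (hpa : ¬ p ∣ a) (ha : a ∈ Icc 1 T)
    (hc : c ∈ Icc 1 T) :
    (((Icc 1 T ×ˢ Icc 1 T).filter fun bd : ℕ × ℕ => a * bd.2 ≡ c * bd.1 [MOD p]).card : ℝ)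
      ≤ 4 * T ^ 2 / p + T * (a.gcd c / √(a * c : ℝ)) + 1 := by
  obtain ⟨ha1, haT⟩ := mem_Icc.1 ha
  obtain ⟨hc1, hcT⟩ := mem_Icc.1 hc
  set g := a.gcd c
  have hg : 0 < g := Nat.gcd_pos_of_pos_left _ ha1
  have hpg : p.Coprime g :=
    (hp.coprime_iff_not_dvd).2 fun h => hpa (h.trans (Nat.gcd_dvd_left a c))
  set x := a / g
  set z := c / g
  have hxa : a = g * x := (Nat.mul_div_cancel' (Nat.gcd_dvd_left a c)).symm
  have hzc : c = g * z := (Nat.mul_div_cancel' (Nat.gcd_dvd_right a c)).symm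
  have hx : 0 < x := Nat.div_pos (Nat.gcd_le_left _ ha1) hg
  have hz : 0 < z := Nat.div_pos (Nat.gcd_le_right _ hc1) hg
  have hsub : ((Icc 1 T ×ˢ Icc 1 T).filter fun bd : ℕ × ℕ => a * bd.2 ≡ c * bd.1 [MOD p])
      ⊆ (Icc 1 T ×ˢ Icc 1 T).filter fun bd : ℕ × ℕ => x * bd.2 ≡ z * bd.1 [MOD p] := by
    refine monotone_filter_right _ fun bd _ h => ?_
    rw [hxa, hzc, mul_assoc, mul_assoc] at h
    exact h.cancel_left_of_coprime hpg
  have hg' : (0 : ℝ) < g := by exact_mod_cast hg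
  have hsqrt : √(a * c : ℝ) = g * √(x * z : ℝ) := by
    rw [hxa, hzc]; push_cast
    rw [show (g * x * (g * z) : ℝ) = g ^ 2 * (x * z) by ring, sqrt_mul (by positivity),
      sqrt_sq hg'.le]
  calc (((Icc 1 T ×ˢ Icc 1 T).filter fun bd : ℕ × ℕ => a * bd.2 ≡ c * bd.1 [MOD p]).card : ℝ)
      ≤ ((Icc 1 T ×ˢ Icc 1 T).filter fun bd : ℕ × ℕ => x * bd.2 ≡ z * bd.1 [MOD p]).card := by
        exact_mod_cast card_le_card hsub
    _ ≤ 4 * T ^ 2 / p + T / √(x * z : ℝ) + 1 :=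
        card_modEq_le_of_coprime hp.pos (Nat.coprime_div_gcd_div_gcd hg) hx hz
          ((Nat.div_le_self _ _).trans haT) ((Nat.div_le_self _ _).trans hcT)
    _ = 4 * T ^ 2 / p + T * (g / √(a * c : ℝ)) + 1 := by
        rw [hsqrt, div_mul_cancel_left₀ hg'.ne', div_eq_mul_inv]
        rfl

def congruenceSolutions (p T : ℕ) : Finset ((ℕ × ℕ) × ℕ × ℕ) :=
  ((Icc 1 T ×ˢ Icc 1 T) ×ˢ (Icc 1 T ×ˢ Icc 1 T)).filter fun y =>
    ¬ p ∣ y.1.1 * y.1.2 * y.2.1 * y.2.2 ∧ (y.1.1 * y.2.2) % p = (y.2.1 * y.1.2) % p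

theorem card_congruenceSolutions_le_sum (p T : ℕ) :
    (congruenceSolutions p T).card ≤ ∑ ac ∈ (Icc 1 T ×ˢ Icc 1 T).filter (¬ p ∣ ·.1),
      ((Icc 1 T ×ˢ Icc 1 T).filter fun bd : ℕ × ℕ => ac.1 * bd.2 ≡ ac.2 * bd.1 [MOD p]).card := by
  rw [← card_sigma]
  refine card_le_card_of_injOn (fun y => ⟨(y.1.1, y.2.1), (y.1.2, y.2.2)⟩) ?_ ?_
  · rintro ⟨⟨a, b⟩, c, d⟩ h
    simp only [congruenceSolutions, mem_coe, mem_filter, mem_product] at h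
    obtain ⟨⟨⟨ha, hb⟩, hc, hd⟩, hpabcd, hmod⟩ := h
    simp only [coe_sigma, Set.mem_sigma_iff, mem_coe, mem_filter, mem_product]
    exact ⟨⟨⟨ha, hc⟩, fun hpa => hpabcd ((hpa.mul_right b).mul_right c |>.mul_right d)⟩,
      ⟨hb, hd⟩, hmod⟩
  · rintro ⟨⟨a, b⟩, c, d⟩ - ⟨⟨a', b'⟩, c', d'⟩ - h
    simp only [Sigma.mk.injEq, Prod.mk.injEq, heq_eq_eq] at h
    obtain ⟨⟨rfl, rfl⟩, rfl, rfl⟩ := h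
    rfl

theorem card_congruenceSolutions_le {p : ℕ} (hp : p.Prime) (T : ℕ) :
    ((congruenceSolutions p T).card : ℝ) ≤ 4 * T ^ 4 / p + 5 * T ^ 2 * (1 + log T) := by
  have hlog : 0 ≤ log T := log_natCast_nonneg T
  calc ((congruenceSolutions p T).card : ℝ)
      ≤ ∑ ac ∈ (Icc 1 T ×ˢ Icc 1 T).filter (¬ p ∣ ·.1),
          (((Icc 1 T ×ˢ Icc 1 T).filter fun bd : ℕ × ℕ =>
            ac.1 * bd.2 ≡ ac.2 * bd.1 [MOD p]).card : ℝ) := by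
        exact_mod_cast card_congruenceSolutions_le_sum p T
    _ ≤ ∑ ac ∈ (Icc 1 T ×ˢ Icc 1 T).filter (¬ p ∣ ·.1),
          (4 * T ^ 2 / p + T * (ac.1.gcd ac.2 / √(ac.1 * ac.2 : ℝ)) + 1) := by
        refine sum_le_sum fun ac hac => ?_
        obtain ⟨hac, hpa⟩ := mem_filter.1 hac
        exact card_modEq_le hp hpa (mem_product.1 hac).1 (mem_product.1 hac).2
    _ ≤ ∑ ac ∈ Icc 1 T ×ˢ Icc 1 T,
          (4 * T ^ 2 / p + T * (ac.1.gcd ac.2 / √(ac.1 * ac.2 : ℝ)) + 1) :=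
        sum_le_sum_of_subset_of_nonneg (filter_subset _ _) fun _ _ _ => by positivity
    _ = T ^ 2 * (4 * T ^ 2 / p + 1)
          + T * ∑ ac ∈ Icc 1 T ×ˢ Icc 1 T, (ac.1.gcd ac.2 / √(ac.1 * ac.2 : ℝ)) := by
        rw [sum_add_distrib, sum_add_distrib, ← mul_sum]
        simp only [sum_const, card_product, Nat.card_Icc, nsmul_eq_mul]
        push_cast; ring
    _ ≤ T ^ 2 * (4 * T ^ 2 / p + 1) + T * (4 * T * (1 + log T)) := by
        gcongr; exact sum_gcd_div_sqrt_le T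
    _ ≤ 4 * T ^ 4 / p + 5 * T ^ 2 * (1 + log T) := by
        have : (T : ℝ) ^ 2 * (4 * T ^ 2 / p) = 4 * T ^ 4 / p := by ring
        nlinarith [sq_nonneg (T : ℝ)]

theorem one_add_log_le {p T : ℕ} (hp : p.Prime) (hT : 1 ≤ T) :
    1 + log T ≤ T ^ 2 / p + 6 * log p ^ 2 := by
  have hp' : (0 : ℝ) < p := by exact_mod_cast hp.pos
  have hT' : (1 : ℝ) ≤ T := by exact_mod_cast hT
  rcases le_or_gt p T with hpT | hTp
  · have hlog : log T ≤ T - 1 := log_le_sub_one_of_pos (by linarith)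
    have hTp : (T : ℝ) ≤ T ^ 2 / p := by
      rw [le_div_iff₀ hp', sq]; gcongr
    nlinarith [sq_nonneg (log p)]
  · have hlog : log T ≤ log p := log_le_log (by linarith) (by exact_mod_cast hTp.le)
    have hhalf : 1 / 2 ≤ log p := le_trans (by norm_num) <|
      log_two_gt_d9.le.trans (log_le_log (by norm_num) (by exact_mod_cast hp.two_le))
    have : (0 : ℝ) ≤ T ^ 2 / p := by positivity
    nlinarith

open Finset in
theorem congruence_solution_count :
    ∃ C > (0:ℝ), ∀ (m p T : ℕ), 2 ≤ m → p.Prime → 2 ≤ T →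
      ((((Finset.Icc 1 T ×ˢ Finset.Icc 1 T) ×ˢ (Finset.Icc 1 T ×ˢ Finset.Icc 1 T)).filter
          (fun y : (ℕ × ℕ) × ℕ × ℕ =>
            ¬ p ∣ y.1.1 * y.1.2 * y.2.1 * y.2.2 ∧
              (y.1.1 * y.2.2) % p = (y.2.1 * y.1.2) % p)).card : ℝ)
        ≤ C * ((T : ℝ) ^ 4 / p + (T : ℝ) ^ 2 * Real.log p ^ 2) := by
  refine ⟨30, by norm_num, fun _ p T _ hp hT => ?_⟩
  have hlog := one_add_log_le hp (by omega : 1 ≤ T)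
  calc ((congruenceSolutions p T).card : ℝ)
      ≤ 4 * T ^ 4 / p + 5 * T ^ 2 * (1 + log T) := card_congruenceSolutions_le hp T
    _ ≤ 4 * T ^ 4 / p + 5 * T ^ 2 * (T ^ 2 / p + 6 * log p ^ 2) := by gcongr
    _ ≤ 30 * (T ^ 4 / p + T ^ 2 * log p ^ 2) := by
        have : (0 : ℝ) ≤ T ^ 4 / p := by positivity
        have : (T : ℝ) ^ 2 * (T ^ 2 / p) = T ^ 4 / p := by ring
        have : (4 : ℝ) * T ^ 4 / p = 4 * (T ^ 4 / p) := by ring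
        nlinarith
end

section
/- Let V ≤ W and U be positive integers, m ≥ 2 an integer, and for each v ∈ [V, W] with gcd(v, m) = 1 let L_v, U_v be integers with 0 ≤ L_v < U_v ≤ U. Then for any integer a with m ∤ a, |Σ_{v=V, gcd(v,m)=1}^{W} Σ_{u=L_v+1}^{U_v} e_m(a·u·v⁻¹)| ≤ (U + W)·(Wm)^{o(1)}, where v⁻¹ is the inverse of v modulo m and e_m(z) = exp(2πiz/m). -/
/-!
For `v` prime to `m` put `c_v = a v⁻¹ ≠ 0` and let `k_v ∈ [1, m/2]` be the absolute value of its
least absolute residue. The inner sum is a geometric progression in `e_m(c_v)`, and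
`|e_m(c_v) - 1| ≥ 4 k_v / m`, so it is at most `min(U, m / (2 k_v))`. The integer
`N_v = v k_v ≤ W m` is `≡ ± a (mod m)` and is divisible by `v`, so a given `N` arises from at most
`d(N) ≪ (W m)^δ` values of `v`, while `m / k_v ≤ W m / N_v`. Finally `∑ min(U, W m / N)` over
`N ≤ W m` in a fixed residue class is at most `U + W H_W`, and `d(n) ≪_δ n^δ` because
`(k + 1) / p^{kδ}` is bounded for each of the finitely many primes `p < 2^{1/δ}` and at most `1`
for the others.
-/

open Finset Real

lemma add_one_le_mul_pow {r : ℝ} (hr : 1 < r) (k : ℕ) :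
    (k + 1 : ℝ) ≤ (1 + 1 / log r) * r ^ k := by
  have hlog : 0 < log r := log_pos hr
  have hexp : k * log r + 1 ≤ r ^ k := by
    rw [← rpow_natCast, rpow_def_of_pos (by linarith), mul_comm (log r)]
    exact add_one_le_exp _
  have hone : 1 ≤ r ^ k := one_le_pow₀ hr.le
  have : (k : ℝ) + 1 / log r ≤ 1 / log r * r ^ k := by
    rw [div_mul_eq_mul_div, one_mul, le_div_iff₀ hlog, add_mul, one_div_mul_cancel hlog.ne']
    exact hexp
  rw [add_mul, one_mul]
  linarith [one_div_pos.mpr hlog]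

lemma add_one_le_mul_prime_pow_rpow {ε : ℝ} (hε : 0 < ε) {p : ℕ} (hp : p.Prime) (k : ℕ) :
    (k + 1 : ℝ) ≤ (if p < ⌈(2 : ℝ) ^ (1 / ε)⌉₊ then 1 + 1 / log (2 ^ ε) else 1) *
      ((p : ℝ) ^ k) ^ ε := by
  have hp2 : (2 : ℝ) ≤ p := by exact_mod_cast hp.two_le
  rw [← rpow_pow_comm (by positivity)]
  split_ifs with hsmall
  · have h2ε : 1 < (2 : ℝ) ^ ε := one_lt_rpow (by norm_num) hε
    have hpε : (2 : ℝ) ^ ε ≤ (p : ℝ) ^ ε := rpow_le_rpow (by norm_num) hp2 hε.le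
    calc (k + 1 : ℝ) ≤ (1 + 1 / log ((p : ℝ) ^ ε)) * ((p : ℝ) ^ ε) ^ k :=
          add_one_le_mul_pow (h2ε.trans_le hpε) k
      _ ≤ (1 + 1 / log (2 ^ ε)) * ((p : ℝ) ^ ε) ^ k := by
          gcongr
          exact log_pos h2ε
  · have hlarge : (2 : ℝ) ≤ (p : ℝ) ^ ε := by
      have h : (2 : ℝ) ^ (1 / ε) ≤ p := Nat.ceil_le.mp (not_lt.mp hsmall)
      calc (2 : ℝ) = ((2 : ℝ) ^ (1 / ε)) ^ ε := by
            rw [← rpow_mul (by norm_num), one_div_mul_cancel hε.ne', rpow_one]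
        _ ≤ (p : ℝ) ^ ε := rpow_le_rpow (by positivity) h hε.le
    calc (k + 1 : ℝ) ≤ 2 ^ k := by exact_mod_cast Nat.lt_two_pow_self
      _ ≤ 1 * ((p : ℝ) ^ ε) ^ k := by rw [one_mul]; gcongr

theorem Nat.card_divisors_le_mul_rpow {ε : ℝ} (hε : 0 < ε) :
    ∃ C > 0, ∀ n : ℕ, (#n.divisors : ℝ) ≤ C * (n : ℝ) ^ ε := by
  set P := ⌈(2 : ℝ) ^ (1 / ε)⌉₊
  set C₁ : ℝ := 1 + 1 / Real.log (2 ^ ε)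
  have hC₁ : 1 ≤ C₁ := by
    have := Real.log_pos (one_lt_rpow (by norm_num : (1 : ℝ) < 2) hε)
    simp only [C₁]; linarith [one_div_pos.mpr this]
  refine ⟨C₁ ^ P, by positivity, fun n => ?_⟩
  rcases eq_or_ne n 0 with rfl | hn
  · simp [zero_rpow hε.ne']
  have hprod : ∏ p ∈ n.primeFactors, (if p < P then C₁ else 1) ≤ C₁ ^ P := by
    rw [prod_ite, prod_const_one, mul_one, prod_const]
    refine pow_le_pow_right₀ hC₁ ((card_le_card fun p hp => ?_).trans (card_range P).le)
    simpa using (mem_filter.mp hp).2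
  calc (#n.divisors : ℝ) = ∏ p ∈ n.primeFactors, ((n.factorization p : ℝ) + 1) := by
        rw [Nat.card_divisors hn]; push_cast; rfl
    _ ≤ ∏ p ∈ n.primeFactors, (if p < P then C₁ else 1) * ((p : ℝ) ^ n.factorization p) ^ ε :=
        prod_le_prod (fun _ _ => by positivity) fun p hp =>
          add_one_le_mul_prime_pow_rpow hε (Nat.prime_of_mem_primeFactors hp) _
    _ = (∏ p ∈ n.primeFactors, (if p < P then C₁ else 1)) * (n : ℝ) ^ ε := by
        rw [prod_mul_distrib, finsetProd_rpow _ _ (fun _ _ => by positivity)]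
        congr
        exact_mod_cast (Nat.prod_primeFactors_pow_factorization hn).symm
    _ ≤ C₁ ^ P * (n : ℝ) ^ ε := by gcongr

lemma norm_sum_Icc_pow_le {𝕜 : Type*} [NormedDivisionRing 𝕜] {ζ : 𝕜} (hζ : ‖ζ‖ = 1) (hζ1 : ζ ≠ 1)
    (A B : ℕ) : ‖∑ u ∈ Icc A B, ζ ^ u‖ ≤ 2 / ‖ζ - 1‖ := by
  rcases lt_or_ge B A with hBA | hAB
  · rw [Icc_eq_empty_of_lt hBA, sum_empty, norm_zero]
    positivity
  rw [← Ico_add_one_right_eq_Icc, geom_sum_Ico hζ1 (by omega), norm_div]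
  gcongr
  calc ‖ζ ^ (B + 1) - ζ ^ A‖ ≤ ‖ζ ^ (B + 1)‖ + ‖ζ ^ A‖ := norm_sub_le _ _
    _ = 2 := by rw [norm_pow, norm_pow, hζ, one_pow, one_pow]; norm_num

namespace ZMod

open Complex

lemma mul_inv_natCast_ne_zero {m : ℕ} {a : ZMod m} (ha : a ≠ 0) {v : ℕ} (hv : v.Coprime m) :
    a * (v : ZMod m)⁻¹ ≠ 0 := by
  have hunit : IsUnit (v : ZMod m)⁻¹ := .of_mul_eq_one_right _ (coe_mul_inv_eq_one v hv)
  rwa [Ne, hunit.mul_left_eq_zero]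

variable {N : ℕ} [NeZero N]

lemma cexp_val_div_eq_stdAddChar (x : ZMod N) :
    Complex.exp (2 * π * I * ((x.val : ℝ) / N)) = stdAddChar x := by
  rw [stdAddChar_apply, toCircle_apply]
  push_cast
  ring_nf

lemma four_mul_abs_div_le_norm_stdAddChar_intCast_sub_one {k : ℤ} (hk : |(k : ℝ)| ≤ N / 2) :
    4 * |(k : ℝ)| / N ≤ ‖stdAddChar (k : ZMod N) - 1‖ := by
  have hN : (0 : ℝ) < N := by exact_mod_cast Nat.pos_of_neZero N
  have habs : |π * k / N| = π * |(k : ℝ)| / N := by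
    rw [abs_div, abs_mul, abs_of_pos pi_pos, abs_of_pos hN]
  have hθ : |π * k / N| ≤ π / 2 := by
    rw [habs, div_le_iff₀ hN]
    nlinarith [pi_pos]
  have hexp : stdAddChar (k : ZMod N) = Complex.exp (I * ((2 * π * k / N : ℝ) : ℂ)) := by
    rw [stdAddChar_coe]
    push_cast
    ring_nf
  rw [hexp, norm_exp_I_mul_ofReal_sub_one, norm_mul, Real.norm_two, norm_eq_abs,
    show 2 * π * k / N / 2 = π * k / N by ring]
  calc 4 * |(k : ℝ)| / N = 2 * (2 / π * |π * k / N|) := by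
        rw [habs]
        field_simp
        ring
    _ ≤ 2 * |Real.sin (π * k / N)| := by gcongr; exact mul_abs_le_abs_sin hθ

lemma four_mul_natAbs_valMinAbs_div_le_norm_stdAddChar_sub_one (x : ZMod N) :
    4 * (x.valMinAbs.natAbs : ℝ) / N ≤ ‖stdAddChar x - 1‖ := by
  have hk : (x.valMinAbs.natAbs : ℝ) ≤ N / 2 :=
    (Nat.cast_le.mpr x.natAbs_valMinAbs_le).trans (by exact_mod_cast Nat.cast_div_le)
  rw [Nat.cast_natAbs, Int.cast_abs] at hk ⊢
  simpa only [coe_valMinAbs] using four_mul_abs_div_le_norm_stdAddChar_intCast_sub_one hk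

lemma norm_sum_Icc_stdAddChar_mul_le {x : ZMod N} (hx : x ≠ 0) (A B : ℕ) :
    ‖∑ u ∈ Icc A B, (stdAddChar ((u : ZMod N) * x) : ℂ)‖ ≤
      min (#(Icc A B) : ℝ) (N / (2 * x.valMinAbs.natAbs)) := by
  have hk : (0 : ℝ) < x.valMinAbs.natAbs := by simpa using hx
  have hpow (u : ℕ) : stdAddChar ((u : ZMod N) * x) = stdAddChar x ^ u := by
    rw [← nsmul_eq_mul, AddChar.map_nsmul_eq_pow]
  simp_rw [hpow]
  refine le_min ?_ ?_
  · refine (norm_sum_le _ _).trans ?_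
    simp [stdAddChar_apply, Circle.norm_coe]
  · have hne : stdAddChar x ≠ 1 := by
      rwa [← (stdAddChar (N := N)).map_zero_eq_one, injective_stdAddChar.ne_iff]
    refine (norm_sum_Icc_pow_le (Circle.norm_coe _) hne A B).trans ?_
    calc 2 / ‖stdAddChar x - 1‖ ≤ 2 / (4 * (x.valMinAbs.natAbs : ℝ) / N) := by
          have hN : (0 : ℝ) < N := by exact_mod_cast Nat.pos_of_neZero N
          gcongr
          exact four_mul_natAbs_valMinAbs_div_le_norm_stdAddChar_sub_one x
      _ = N / (2 * x.valMinAbs.natAbs) := by field_simp; ring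

lemma norm_sum_Icc_cexp_val_mul_inv_le {a : ZMod N} (ha : a ≠ 0) {v : ℕ} (hv : v.Coprime N)
    (A B : ℕ) :
    ‖∑ u ∈ Icc A B, Complex.exp (2 * π * I * (((a * (u : ZMod N) * (v : ZMod N)⁻¹).val : ℝ) / N))‖ ≤
      min (#(Icc A B) : ℝ) (N / (2 * (a * (v : ZMod N)⁻¹).valMinAbs.natAbs)) := by
  have hchar (u : ℕ) :
      Complex.exp (2 * π * I * (((a * (u : ZMod N) * (v : ZMod N)⁻¹).val : ℝ) / N)) =
        stdAddChar ((u : ZMod N) * (a * (v : ZMod N)⁻¹)) := by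
    rw [cexp_val_div_eq_stdAddChar]
    ring_nf
  simp_rw [hchar]
  exact norm_sum_Icc_stdAddChar_mul_le (mul_inv_natCast_ne_zero ha hv) A B

end ZMod

lemma Finset.sum_comp_le_mul_sum {ι κ : Type*} [DecidableEq κ] {F : Finset ι} {S : Finset κ}
    {f : ι → κ} (hf : ∀ v ∈ F, f v ∈ S) {g : κ → ℝ} (hg : ∀ N ∈ S, 0 ≤ g N) {D : ℝ}
    (hD : ∀ N ∈ S, (#{v ∈ F | f v = N} : ℝ) ≤ D) :
    ∑ v ∈ F, g (f v) ≤ D * ∑ N ∈ S, g N := by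
  rw [← sum_fiberwise_of_maps_to hf, mul_sum]
  refine sum_le_sum fun N hN => ?_
  rw [sum_congr rfl fun v hv => by rw [(mem_filter.mp hv).2], sum_const, nsmul_eq_mul]
  exact mul_le_mul_of_nonneg_right (hD N hN) (hg N hN)

/-- Writing `N = q m + r`, the quotient `q ≤ W` determines `N` in its class, and
`W m / N ≤ W / q`. -/
lemma sum_filter_natCast_eq_min_div_le {m : ℕ} [NeZero m] (r : ZMod m) {U : ℝ} (hU : 0 ≤ U)
    (W : ℕ) :
    ∑ N ∈ Icc 1 (W * m) with ((N : ℕ) : ZMod m) = r, min U ((W * m : ℝ) / N) ≤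
      U + W * harmonic W := by
  set S := (Icc 1 (W * m)).filter fun N : ℕ => (N : ZMod m) = r
  set φ : ℕ → ℝ := fun q => if q = 0 then U else W / q
  have hm : (0 : ℝ) < m := by exact_mod_cast Nat.pos_of_neZero m
  have hφ : ∀ N ∈ Icc 1 (W * m), min U ((W * m : ℝ) / N) ≤ φ (N / m) := by
    intro N hN
    by_cases hq : N / m = 0
    · simp [φ, hq]
    · simp only [φ, hq, if_false]
      refine (min_le_right _ _).trans ?_
      have hle : ((N / m : ℕ) : ℝ) * m ≤ N := by exact_mod_cast Nat.div_mul_le_self N m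
      have hq' : (0 : ℝ) < (N / m : ℕ) := by exact_mod_cast Nat.pos_of_ne_zero hq
      rw [div_le_div_iff₀ (by linarith [mul_pos hq' hm]) hq']
      nlinarith [(by positivity : (0 : ℝ) ≤ W)]
  have hinj : Set.InjOn (· / m) (S : Set ℕ) := by
    intro N₁ h₁ N₂ h₂ hq
    rw [mem_coe] at h₁ h₂
    have hmod : N₁ % m = N₂ % m := by
      rw [← ZMod.natCast_eq_natCast_iff']
      exact (mem_filter.mp h₁).2.trans (mem_filter.mp h₂).2.symm
    rw [← Nat.div_add_mod N₁ m, ← Nat.div_add_mod N₂ m]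
    simp_all
  have himage : image (· / m) S ⊆ range (W + 1) := by
    intro q hq
    obtain ⟨N, hN, rfl⟩ := mem_image.mp hq
    have := (mem_Icc.mp (mem_filter.mp hN).1).2
    exact mem_range.mpr (Nat.lt_succ_of_le (Nat.div_le_of_le_mul (by linarith)))
  calc ∑ N ∈ S, min U ((W * m : ℝ) / N) ≤ ∑ N ∈ S, φ (N / m) :=
        sum_le_sum fun N hN => hφ N (mem_filter.mp hN).1
    _ = ∑ q ∈ image (· / m) S, φ q := (sum_image hinj).symm
    _ ≤ ∑ q ∈ range (W + 1), φ q :=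
        sum_le_sum_of_subset_of_nonneg himage fun q _ _ => by
          simp only [φ]; split_ifs <;> positivity
    _ = U + W * harmonic W := by
        simp [sum_range_succ', φ, harmonic, mul_sum, div_eq_mul_inv, add_comm]

lemma harmonic_le_mul_rpow {δ : ℝ} (hδ : 0 < δ) {n : ℕ} {X : ℝ} (hX : 1 ≤ X) (hn : n ≤ X) :
    (harmonic n : ℝ) ≤ (1 + 1 / δ) * X ^ δ := by
  have hXδ : 1 ≤ X ^ δ := one_le_rpow hX hδ.le
  have hlog : Real.log n ≤ X ^ δ / δ :=
    (log_le_rpow_div n.cast_nonneg hδ).trans (by gcongr)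
  calc (harmonic n : ℝ) ≤ 1 + Real.log n := harmonic_le_one_add_log n
    _ ≤ (1 + 1 / δ) * X ^ δ := by rw [add_mul, one_mul, one_div_mul_eq_div]; linarith

lemma add_mul_harmonic_le_mul_rpow {δ : ℝ} (hδ : 0 < δ) {U : ℝ} (hU : 0 ≤ U) {n : ℕ} {X : ℝ}
    (hX : 1 ≤ X) (hn : n ≤ X) : U + n * harmonic n ≤ (U + n) * ((1 + 1 / δ) * X ^ δ) := by
  have hB : 1 ≤ (1 + 1 / δ) * X ^ δ :=
    one_le_mul_of_one_le_of_one_le (by simp [hδ.le]) (one_le_rpow hX hδ.le)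
  have hH := harmonic_le_mul_rpow hδ hX hn
  nlinarith [n.cast_nonneg (α := ℝ)]

lemma sum_min_div_natAbs_valMinAbs_mul_inv_le {m : ℕ} [NeZero m] {a : ZMod m} (ha : a ≠ 0)
    {U : ℝ} (hU : 0 ≤ U) {W : ℕ} {F : Finset ℕ} (hF : ∀ v ∈ F, 0 < v ∧ v ≤ W ∧ v.Coprime m)
    {C δ : ℝ} (hδ : 0 ≤ δ) (hdiv : ∀ n : ℕ, (#n.divisors : ℝ) ≤ C * (n : ℝ) ^ δ) :
    ∑ v ∈ F, min U (m / (2 * (a * (v : ZMod m)⁻¹).valMinAbs.natAbs)) ≤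
      C * ((W * m : ℕ) : ℝ) ^ δ * (2 * (U + W * harmonic W)) := by
  set k : ℕ → ℕ := fun v => (a * (v : ZMod m)⁻¹).valMinAbs.natAbs
  set S : ZMod m → Finset ℕ := fun r => (Icc 1 (W * m)).filter fun N : ℕ => (N : ZMod m) = r
  have hm : (0 : ℝ) < m := by exact_mod_cast Nat.pos_of_neZero m
  have hC : 0 ≤ C := by linarith [show (1 : ℝ) ≤ C by simpa using hdiv 1]
  have hk (v) (hv : v ∈ F) : 0 < k v ∧ k v ≤ m := by
    obtain ⟨-, -, hcop⟩ := hF v hv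
    refine ⟨Int.natAbs_pos.mpr ?_, (ZMod.natAbs_valMinAbs_le _).trans (Nat.div_le_self m 2)⟩
    rw [Ne, ZMod.valMinAbs_eq_zero]
    exact ZMod.mul_inv_natCast_ne_zero ha hcop
  have hmem (v) (hv : v ∈ F) : v * k v ∈ S a ∪ S (-a) := by
    obtain ⟨hv0, hvW, hcop⟩ := hF v hv
    have hinv := ZMod.coe_mul_inv_eq_one v hcop
    have hNle : v * k v ≤ W * m := Nat.mul_le_mul hvW (hk v hv).2
    have hNpos : 0 < v * k v := Nat.mul_pos hv0 (hk v hv).1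
    simp only [S, mem_union, mem_filter, mem_Icc, Nat.cast_mul, k, ZMod.natCast_natAbs_valMinAbs]
    split_ifs
    · exact .inl ⟨⟨hNpos, hNle⟩, by linear_combination a * hinv⟩
    · exact .inr ⟨⟨hNpos, hNle⟩, by linear_combination (-a) * hinv⟩
  have hweight (v) (hv : v ∈ F) :
      min U (m / (2 * k v)) ≤ min U ((W * m : ℝ) / ((v * k v : ℕ) : ℝ)) := by
    obtain ⟨hv0, hvW, -⟩ := hF v hv
    have hv0' : (0 : ℝ) < v := by exact_mod_cast hv0
    have hk0 : (0 : ℝ) < k v := by exact_mod_cast (hk v hv).1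
    have hvW' : (v : ℝ) ≤ W := by exact_mod_cast hvW
    refine min_le_min le_rfl ?_
    rw [Nat.cast_mul, div_le_div_iff₀ (by positivity) (by positivity)]
    nlinarith [mul_pos hm hk0, mul_pos hv0' hk0]
  have hfiber (N) (hN : N ∈ S a ∪ S (-a)) :
      (#{v ∈ F | v * k v = N} : ℝ) ≤ C * ((W * m : ℕ) : ℝ) ^ δ := by
    have hN' : 1 ≤ N ∧ N ≤ W * m := by
      rcases mem_union.mp hN with h | h <;> exact mem_Icc.mp (mem_filter.mp h).1
    have hsub : {v ∈ F | v * k v = N} ⊆ N.divisors := fun v hv => by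
      rw [mem_filter] at hv
      exact Nat.mem_divisors.mpr ⟨⟨k v, hv.2.symm⟩, by omega⟩
    calc (#{v ∈ F | v * k v = N} : ℝ) ≤ #N.divisors := by exact_mod_cast card_le_card hsub
      _ ≤ C * (N : ℝ) ^ δ := hdiv N
      _ ≤ C * ((W * m : ℕ) : ℝ) ^ δ := by
          gcongr
          exact_mod_cast hN'.2
  set g : ℕ → ℝ := fun N => min U ((W * m : ℝ) / N)
  have hg (N) : 0 ≤ g N := le_min hU (by positivity)
  calc ∑ v ∈ F, min U (m / (2 * k v)) ≤ ∑ v ∈ F, g (v * k v) := sum_le_sum hweight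
    _ ≤ C * ((W * m : ℕ) : ℝ) ^ δ * ∑ N ∈ S a ∪ S (-a), g N :=
        sum_comp_le_mul_sum hmem (fun N _ => hg N) hfiber
    _ ≤ C * ((W * m : ℕ) : ℝ) ^ δ * (∑ N ∈ S a, g N + ∑ N ∈ S (-a), g N) := by
        gcongr
        rw [← sum_union_inter]
        exact le_add_of_nonneg_right (sum_nonneg fun N _ => hg N)
    _ ≤ C * ((W * m : ℕ) : ℝ) ^ δ * (2 * (U + W * harmonic W)) := by
        have hpos : ∑ N ∈ S a, g N ≤ U + W * harmonic W := sum_filter_natCast_eq_min_div_le a hU W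
        have hneg : ∑ N ∈ S (-a), g N ≤ U + W * harmonic W :=
          sum_filter_natCast_eq_min_div_le (-a) hU W
        gcongr
        linarith

open Finset in
theorem expsum_ratios_bound :
    ∀ ε > (0:ℝ), ∃ C > (0:ℝ), ∀ (m U V W : ℕ) (a : ℤ) (L Uv : ℕ → ℕ),
      2 ≤ m → 1 ≤ V → V ≤ W → 1 ≤ U → ¬ (m:ℤ) ∣ a →
      (∀ v, L v < Uv v ∧ Uv v ≤ U) →
      ‖∑ v ∈ (Finset.Icc V W).filter (fun v => Nat.gcd v m = 1),
          ∑ u ∈ Finset.Icc (L v + 1) (Uv v),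
            Complex.exp (2 * Real.pi * Complex.I *
              ((((a : ZMod m) * (u : ZMod m) * (v : ZMod m)⁻¹).val : ℝ) / m))‖
        ≤ C * ((U : ℝ) + W) * ((W * m : ℕ) : ℝ) ^ ε := by
  intro ε hε
  obtain ⟨δ, hδ, rfl⟩ : ∃ δ > 0, ε = δ + δ := ⟨ε / 2, half_pos hε, by ring⟩
  obtain ⟨C₀, hC₀, hdiv⟩ := Nat.card_divisors_le_mul_rpow hδ
  refine ⟨2 * C₀ * (1 + 1 / δ), by positivity, ?_⟩
  intro m U V W a L Uv hm hV hVW _ ha hLU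
  have : NeZero m := ⟨by omega⟩
  have ha' : (a : ZMod m) ≠ 0 := by rwa [Ne, ZMod.intCast_zmod_eq_zero_iff_dvd]
  have hF : ∀ v ∈ (Icc V W).filter (fun v => Nat.gcd v m = 1), 0 < v ∧ v ≤ W ∧ v.Coprime m := by
    intro v hv
    simp only [mem_filter, mem_Icc] at hv
    exact ⟨by omega, hv.1.2, hv.2⟩
  have hcard (v : ℕ) : (#(Icc (L v + 1) (Uv v)) : ℝ) ≤ U := by
    have := hLU v
    exact_mod_cast (Nat.card_Icc _ _).trans_le (by omega)
  have hX : (1 : ℝ) ≤ ((W * m : ℕ) : ℝ) := Nat.one_le_cast.mpr (Nat.mul_pos (by omega) (by omega))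
  calc _ ≤ _ := norm_sum_le _ _
    _ ≤ _ := sum_le_sum fun v hv =>
          (ZMod.norm_sum_Icc_cexp_val_mul_inv_le ha' (hF v hv).2.2 _ _).trans
            (min_le_min (hcard v) le_rfl)
    _ ≤ C₀ * ((W * m : ℕ) : ℝ) ^ δ * (2 * (U + W * harmonic W)) :=
        sum_min_div_natAbs_valMinAbs_mul_inv_le ha' U.cast_nonneg hF hδ.le hdiv
    _ ≤ C₀ * ((W * m : ℕ) : ℝ) ^ δ * (2 * ((U + W) * ((1 + 1 / δ) * ((W * m : ℕ) : ℝ) ^ δ))) := by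
        gcongr
        exact add_mul_harmonic_le_mul_rpow hδ U.cast_nonneg hX
          (by exact_mod_cast Nat.le_mul_of_pos_right W (by omega))
    _ = 2 * C₀ * (1 + 1 / δ) * ((U : ℝ) + W) * ((W * m : ℕ) : ℝ) ^ (δ + δ) := by
        rw [rpow_add (by linarith)]
        ring
end
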